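/- For any coordinate ℓ ≤ d and any s ∈ ℕ, the random variable Q_B(s) = Σ_{n=0}^{s−1} Π^{(ℓ)}_n ( B_{ℓ,−n} + Σ_{j: j ▷ ℓ} Σ_{m=1}^{s−n−1} π'_{ℓj}(−n, −n−m+1) B_{j,−n−m} ) has finite moment of order α̃_ℓ: E[Q_B(s)^{α̃_ℓ}] < ∞. -/

import Mathlib

/-!
Every summand of `Q_B(s)` is a product of entries of the `A_t` and `B_t` taken at pairwise
distinct times, so its factors are independent and the product lies in `Lᵖ`, `p = α̃_ℓ`, as soon
as each factor does. Along the matrix products that start from row `ℓ`, an entry `A_{ij}` with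
`ℓ ⊴ i` and `ℓ ⋬ j` vanishes a.s.; every other entry that occurs lies in a row `i` with `ℓ ⊴ i`,
hence has a finite `α_i`-moment, and `α̃_ℓ ≤ α_i`.
-/

open MeasureTheory ProbabilityTheory Filter Matrix Set
open scoped ENNReal Topology

namespace TriSRE

variable {Ω : Type*} [MeasurableSpace Ω]

/-- Condition (T) of Matsui–Świątkowski for a random matrix `A` and random vector `B`,
with tail indices `α`. -/
structure CondT {d : ℕ} (μ : Measure Ω)
    (A : Ω → Matrix (Fin d) (Fin d) ℝ) (B : Ω → Fin d → ℝ) (α : Fin d → ℝ) : Prop where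
  measA : ∀ i j, Measurable fun ω => A ω i j
  measB : ∀ i, Measurable fun ω => B ω i
  /-- (T-1) nonnegative entries -/
  nonnegA : ∀ i j, ∀ᵐ ω ∂μ, 0 ≤ A ω i j
  nonnegB : ∀ i, ∀ᵐ ω ∂μ, 0 ≤ B ω i
  /-- (T-2) -/
  B_ne_zero : ∀ i, μ {ω | B ω i = 0} < 1
  /-- (T-3) upper triangular -/
  upperTriangular : ∀ i j, j < i → ∀ᵐ ω ∂μ, A ω i j = 0
  /-- (T-4) -/
  alpha_pos : ∀ i, 0 < α i
  alpha_injective : ∀ i j, i ≠ j → α i ≠ α j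
  diag_moment_one : ∀ i, ∫ ω, A ω i i ^ α i ∂μ = 1
  /-- (T-5) -/
  A_moment : ∀ i j, Integrable (fun ω => A ω i j ^ α i) μ
  /-- (T-6) -/
  B_moment : ∀ i, Integrable (fun ω => B ω i ^ α i) μ
  /-- (T-7) -/
  log_moment : ∀ i, Integrable (fun ω => A ω i i ^ α i * max (Real.log (A ω i i)) 0) μ
  /-- (T-8) the conditional law of `log A i i` on `{A i i > 0}` is non-arithmetic,
  i.e. not concentrated on any lattice `c ℤ`. -/
  nonarithmetic : ∀ i, ∀ c : ℝ,
    μ {ω | 0 < A ω i i ∧ ∀ k : ℤ, Real.log (A ω i i) ≠ c * k} ≠ 0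

/-- `i ⪯ j` : `i` directly depends on `j` (the entry `A i j` is positive with
positive probability). -/
def DirectDep {d : ℕ} (μ : Measure Ω) (A : Ω → Matrix (Fin d) (Fin d) ℝ)
    (i j : Fin d) : Prop :=
  0 < μ {ω | 0 < A ω i j}

/-- `i ⊴ j` : `i` depends on `j` (a chain of direct dependencies from `i` to `j`). -/
def Dep {d : ℕ} (μ : Measure Ω) (A : Ω → Matrix (Fin d) (Fin d) ℝ) :
    Fin d → Fin d → Prop :=
  Relation.ReflTransGen (DirectDep μ A)

/-- the modified tail index `α̃ i = min {α j : i ⊴ j}`. -/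
noncomputable def tildeAlpha {d : ℕ} (μ : Measure Ω) (A : Ω → Matrix (Fin d) (Fin d) ℝ)
    (α : Fin d → ℝ) (i : Fin d) : ℝ :=
  sInf {a : ℝ | ∃ j, Dep μ A i j ∧ a = α j}

variable {d : ℕ}

/-- `PiProd A t n = A_t · A_{t-1} ⋯ A_{t-n+1}` (the product `Π_{t, t-n+1}` of `n` factors);
in particular `PiProd A 0 n = Π_n`. -/
noncomputable def PiProd (A : ℤ → Ω → Matrix (Fin d) (Fin d) ℝ) (t : ℤ) :
    ℕ → Ω → Matrix (Fin d) (Fin d) ℝ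
  | 0 => fun _ => 1
  | n + 1 => fun ω => PiProd A t n ω * A (t - n) ω

/-- `diagProd A i t n = A_{ii,t} · A_{ii,t-1} ⋯ A_{ii,t-n+1}` (the diagonal product
`Π^{(i)}_{t,t-n+1}`); in particular `diagProd A i 0 n = Π^{(i)}_n`. -/
noncomputable def diagProd (A : ℤ → Ω → Matrix (Fin d) (Fin d) ℝ) (i : Fin d) (t : ℤ) :
    ℕ → Ω → ℝ
  | 0 => fun _ => 1
  | n + 1 => fun ω => diagProd A i t n ω * A (t - n) ω i i

/-- The stationary solution process `W_t = Σ_{n=0}^∞ Π_{t,t+1-n} B_{t-n}`. -/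
noncomputable def Wproc (A : ℤ → Ω → Matrix (Fin d) (Fin d) ℝ) (B : ℤ → Ω → Fin d → ℝ)
    (t : ℤ) (ω : Ω) : Fin d → ℝ :=
  ∑' n : ℕ, PiProd A t n ω *ᵥ B (t - n) ω

/-- `(A_t, B_t)_{t ∈ ℤ}` is an i.i.d. sequence (with generic element `(A 0, B 0)`). -/
def IIDCopies (μ : Measure Ω) (A : ℤ → Ω → Matrix (Fin d) (Fin d) ℝ)
    (B : ℤ → Ω → Fin d → ℝ) : Prop :=
  (∀ t i j, Measurable fun ω => A t ω i j) ∧ (∀ t i, Measurable fun ω => B t ω i) ∧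
  iIndepFun
    (fun t ω => (Matrix.of.symm (A t ω), B t ω)) μ ∧
  ∀ t : ℤ, μ.map (fun ω => (Matrix.of.symm (A t ω), B t ω))
    = μ.map (fun ω => (Matrix.of.symm (A 0 ω), B 0 ω))

open scoped Classical in
/-- `D_{i,t} = Σ_{j : j ≻ i} A_{ij,t} W_{j,t-1} + B_{i,t}`. -/
noncomputable def Dterm (μ : Measure Ω) (A : ℤ → Ω → Matrix (Fin d) (Fin d) ℝ)
    (B : ℤ → Ω → Fin d → ℝ) (i : Fin d) (t : ℤ) (ω : Ω) : ℝ :=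
  (∑ j ∈ Finset.univ.filter fun j => DirectDep μ (A 0) i j ∧ i ≠ j,
      A t ω i j * Wproc A B (t - 1) ω j) + B t ω i

/-- `A⁰_t` : the matrix `A_t` with the diagonal replaced by zeros. -/
noncomputable def Azero (A : ℤ → Ω → Matrix (Fin d) (Fin d) ℝ) (t : ℤ) (ω : Ω) :
    Matrix (Fin d) (Fin d) ℝ :=
  Matrix.of fun i j => if i = j then 0 else A t ω i j

/-- The matrix of the `π'_{ij}(t, t-m+1)` (`m ≥ 1` factors): `A⁰_t · Π_{t-1, t-m+1}`. -/
noncomputable def piPrime (A : ℤ → Ω → Matrix (Fin d) (Fin d) ℝ) (t : ℤ) (m : ℕ)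
    (ω : Ω) : Matrix (Fin d) (Fin d) ℝ :=
  Azero A t ω * PiProd A (t - 1) (m - 1) ω

end TriSRE

section SupSigma

variable {Ω ι β : Type*} [MeasurableSpace β] {𝓕 : ι → MeasurableSpace Ω} {S T : Set ι}
  {f : Ω → β}

theorem Measurable.biSup_of_mem {i : ι} (hf : Measurable[𝓕 i] f) (hi : i ∈ S) :
    Measurable[⨆ j ∈ S, 𝓕 j] f :=
  hf.mono (le_biSup 𝓕 hi) le_rfl

theorem Measurable.biSup_mono (hf : Measurable[⨆ i ∈ S, 𝓕 i] f) (hST : S ⊆ T) :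
    Measurable[⨆ i ∈ T, 𝓕 i] f :=
  hf.mono (_root_.biSup_mono hST) le_rfl

end SupSigma

namespace MeasureTheory

variable {Ω : Type*} {mΩ : MeasurableSpace Ω} {μ : Measure Ω}

lemma memLp_ofReal_of_integrable_rpow [IsFiniteMeasure μ] {f : Ω → ℝ}
    (hf : AEStronglyMeasurable f μ) (hf0 : 0 ≤ᵐ[μ] f) {β γ : ℝ} (hβ : 0 < β) (hβγ : β ≤ γ)
    (hint : Integrable (fun ω => f ω ^ γ) μ) : MemLp f (ENNReal.ofReal β) μ := by
  have hγ : MemLp f (ENNReal.ofReal γ) μ := by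
    rw [← integrable_norm_rpow_iff hf (by simpa using hβ.trans_le hβγ) ENNReal.ofReal_ne_top,
      ENNReal.toReal_ofReal (hβ.le.trans hβγ)]
    refine hint.congr ?_
    filter_upwards [hf0] with ω hω
    rw [Real.norm_of_nonneg hω]
  exact hγ.mono_exponent (ENNReal.ofReal_le_ofReal hβγ)

lemma MemLp.lintegral_ofReal_rpow_lt_top {f : Ω → ℝ} {β : ℝ} (hβ : 0 < β)
    (hf : MemLp f (ENNReal.ofReal β) μ) : ∫⁻ ω, ENNReal.ofReal (f ω ^ β) ∂μ < ∞ := by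
  have hint := hf.integrable_norm_rpow (by simpa using hβ) ENNReal.ofReal_ne_top
  rw [ENNReal.toReal_ofReal hβ.le] at hint
  refine lt_of_le_of_lt (lintegral_mono fun ω => ENNReal.ofReal_le_ofReal ?_) hint.lintegral_lt_top
  exact (le_abs_self _).trans (Real.abs_rpow_le_abs_rpow _ _)

end MeasureTheory

namespace ProbabilityTheory

variable {Ω ι : Type*} {mΩ : MeasurableSpace Ω} {μ : Measure Ω} {p : ℝ≥0∞}

lemma IndepFun.memLp_mul {f g : Ω → ℝ} (hfg : IndepFun f g μ) (hf : MemLp f p μ)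
    (hg : MemLp g p μ) : MemLp (f * g) p μ := by
  rcases eq_or_ne p 0 with rfl | hp0
  · exact memLp_zero_iff_aestronglyMeasurable.2 (hf.1.mul hg.1)
  rcases eq_or_ne p ∞ with rfl | hp
  · exact hg.mul hf
  rw [← integrable_norm_rpow_iff (hf.1.mul hg.1) hp0 hp]
  have hn : Measurable fun x : ℝ => ‖x‖ ^ p.toReal := by fun_prop
  refine ((hfg.comp hn hn).integrable_mul (hf.integrable_norm_rpow hp0 hp)
    (hg.integrable_norm_rpow hp0 hp)).congr (ae_of_all _ fun ω => ?_)
  simp [norm_mul, Real.mul_rpow]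

variable {𝓕 : ι → MeasurableSpace Ω}

lemma iIndep.memLp_mul_of_disjoint (h𝓕 : ∀ i, 𝓕 i ≤ mΩ) (hind : iIndep 𝓕 μ) {S T : Set ι}
    (hST : Disjoint S T) {f g : Ω → ℝ} (hfm : Measurable[⨆ i ∈ S, 𝓕 i] f)
    (hgm : Measurable[⨆ i ∈ T, 𝓕 i] g) (hf : MemLp f p μ) (hg : MemLp g p μ) :
    MemLp (f * g) p μ :=
  IndepFun.memLp_mul ((IndepFun_iff_Indep f g μ).2 (indep_of_indep_of_le
    (indep_iSup_of_disjoint h𝓕 hind hST) hfm.comap_le hgm.comap_le)) hf hg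

lemma iIndep.memLp_mul_apply_of_disjoint {n : Type*} [Fintype n] (h𝓕 : ∀ i, 𝓕 i ≤ mΩ)
    (hind : iIndep 𝓕 μ) {S T : Set ι} (hST : Disjoint S T) {M N : Ω → Matrix n n ℝ}
    (R : Set n) {i j : n} (hMm : ∀ k, Measurable[⨆ u ∈ S, 𝓕 u] fun ω => M ω i k)
    (hNm : ∀ k, Measurable[⨆ u ∈ T, 𝓕 u] fun ω => N ω k j)
    (hM : ∀ k ∈ R, MemLp (fun ω => M ω i k) p μ) (hMz : ∀ k ∉ R, (fun ω => M ω i k) =ᵐ[μ] 0)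
    (hN : ∀ k ∈ R, MemLp (fun ω => N ω k j) p μ) :
    MemLp (fun ω => (M ω * N ω) i j) p μ := by
  simp only [Matrix.mul_apply]
  refine memLp_finsetSum _ fun k _ => ?_
  by_cases hk : k ∈ R
  · exact hind.memLp_mul_of_disjoint h𝓕 hST (hMm k) (hNm k) (hM k hk) (hN k hk)
  · refine MemLp.zero.ae_eq ?_
    filter_upwards [hMz k hk] with ω hω
    simp [hω]

end ProbabilityTheory

namespace Matrix

variable {Ω n : Type*} [Fintype n] {mΩ : MeasurableSpace Ω} {μ : MeasureTheory.Measure Ω}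

lemma mul_apply_ae_eq_zero {M N : Ω → Matrix n n ℝ} (R : Set n) {i j : n}
    (hM : ∀ k ∉ R, (fun ω => M ω i k) =ᵐ[μ] 0) (hN : ∀ k ∈ R, (fun ω => N ω k j) =ᵐ[μ] 0) :
    (fun ω => (M ω * N ω) i j) =ᵐ[μ] 0 := by
  have h : ∀ᵐ ω ∂μ, ∀ k, M ω i k * N ω k j = 0 := by
    refine ae_all_iff.2 fun k => ?_
    by_cases hk : k ∈ R
    · filter_upwards [hN k hk] with ω hω
      simp [show N ω k j = 0 from hω]
    · filter_upwards [hM k hk] with ω hω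
      simp [show M ω i k = 0 from hω]
  filter_upwards [h] with ω hω
  simp [Matrix.mul_apply, hω]

end Matrix

namespace TriSRE

variable {Ω : Type*} {d : ℕ}

section Dependence

variable {mΩ : MeasurableSpace Ω} {μ : Measure Ω} {A : Ω → Matrix (Fin d) (Fin d) ℝ}
  {α : Fin d → ℝ}

lemma finite_tildeAlpha_set (i : Fin d) : {a : ℝ | ∃ j, Dep μ A i j ∧ a = α j}.Finite :=
  (Set.finite_range α).subset (by rintro _ ⟨k, -, rfl⟩; exact ⟨k, rfl⟩)

lemma tildeAlpha_le {i j : Fin d} (h : Dep μ A i j) : tildeAlpha μ A α i ≤ α j :=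
  csInf_le (finite_tildeAlpha_set i).bddBelow ⟨j, h, rfl⟩

lemma tildeAlpha_pos (hα : ∀ i, 0 < α i) (i : Fin d) : 0 < tildeAlpha μ A α i := by
  obtain ⟨j, -, hj⟩ := Set.Nonempty.csInf_mem (s := {a : ℝ | ∃ j, Dep μ A i j ∧ a = α j})
    ⟨α i, i, .refl, rfl⟩ (finite_tildeAlpha_set i)
  rw [tildeAlpha, hj]
  exact hα j

lemma CondT.ae_eq_zero_of_not_directDep {B : Ω → Fin d → ℝ} (hT : CondT μ A B α) {i j : Fin d}
    (h : ¬ DirectDep μ A i j) : (fun ω => A ω i j) =ᵐ[μ] 0 := by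
  have hpos : ∀ᵐ ω ∂μ, ¬ 0 < A ω i j := by
    rw [ae_iff]
    simpa [DirectDep] using h
  filter_upwards [hpos, hT.nonnegA i j] with ω h1 h2
  exact le_antisymm (not_lt.1 h1) h2

end Dependence

section Products

variable {𝓕 : ℤ → MeasurableSpace Ω} {A : ℤ → Ω → Matrix (Fin d) (Fin d) ℝ}
  {B : ℤ → Ω → Fin d → ℝ}

lemma Azero_apply (t : ℤ) (ω : Ω) (i j : Fin d) :
    Azero A t ω i j = if i = j then 0 else A t ω i j :=
  rfl

lemma measurable_diagProd (hA : ∀ t i j, Measurable[𝓕 t] fun ω => A t ω i j) (i : Fin d)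
    (t : ℤ) : ∀ n : ℕ, Measurable[⨆ u ∈ Ioc (t - n) t, 𝓕 u] (diagProd A i t n)
  | 0 => measurable_const
  | n + 1 => ((measurable_diagProd hA i t n).biSup_mono (Ioc_subset_Ioc_left (by omega))).mul
      ((hA (t - n) i i).biSup_of_mem (by simp))

lemma measurable_PiProd_apply (hA : ∀ t i j, Measurable[𝓕 t] fun ω => A t ω i j) (t : ℤ) :
    ∀ (m : ℕ) (i j : Fin d), Measurable[⨆ u ∈ Ioc (t - m) t, 𝓕 u] fun ω => PiProd A t m ω i j
  | 0, _, _ => measurable_const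
  | m + 1, i, j => by
    simp only [PiProd, Matrix.mul_apply]
    exact Finset.measurable_sum _ fun k _ =>
      ((measurable_PiProd_apply hA t m i k).biSup_mono (Ioc_subset_Ioc_left (by omega))).mul
        ((hA (t - m) k j).biSup_of_mem (by simp))

lemma measurable_Azero_apply (hA : ∀ t i j, Measurable[𝓕 t] fun ω => A t ω i j) (t : ℤ)
    (i j : Fin d) : Measurable[𝓕 t] fun ω => Azero A t ω i j := by
  simp only [Azero_apply]
  split_ifs
  exacts [measurable_const, hA t i j]

lemma measurable_piPrime_apply (hA : ∀ t i j, Measurable[𝓕 t] fun ω => A t ω i j) (t : ℤ)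
    {m : ℕ} (hm : 1 ≤ m) (i j : Fin d) :
    Measurable[⨆ u ∈ Ioc (t - m) t, 𝓕 u] fun ω => piPrime A t m ω i j := by
  simp only [piPrime, Matrix.mul_apply]
  refine Finset.measurable_sum _ fun k _ =>
    ((measurable_Azero_apply hA t i k).biSup_of_mem ?_).mul
      ((measurable_PiProd_apply hA (t - 1) (m - 1) k j).biSup_mono ?_)
  · simp only [mem_Ioc]
    omega
  · intro u
    simp only [mem_Ioc]
    omega

/-- For `t = -n`, `J = {j | ℓ ◁ j}` and `M = {1, …, s - n - 1}`, the factor multiplying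
`Π^{(ℓ)}_n` in `Q_B(s)`. -/
noncomputable def QBInner (A : ℤ → Ω → Matrix (Fin d) (Fin d) ℝ) (B : ℤ → Ω → Fin d → ℝ)
    (J : Finset (Fin d)) (M : Finset ℕ) (ℓ : Fin d) (t : ℤ) (ω : Ω) : ℝ :=
  B t ω ℓ + ∑ j ∈ J, ∑ m ∈ M, piPrime A t m ω ℓ j * B (t - m) ω j

lemma measurable_QBInner (hAm : ∀ t i j, Measurable[𝓕 t] fun ω => A t ω i j)
    (hBm : ∀ t i, Measurable[𝓕 t] fun ω => B t ω i) (J : Finset (Fin d)) {M : Finset ℕ}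
    (hM : ∀ m ∈ M, 1 ≤ m) (ℓ : Fin d) (t : ℤ) :
    Measurable[⨆ u ∈ Iic t, 𝓕 u] (QBInner A B J M ℓ t) := by
  unfold QBInner
  refine ((hBm t ℓ).biSup_of_mem (mem_Iic.2 le_rfl)).add (Finset.measurable_sum _ fun j _ =>
    Finset.measurable_sum _ fun m hm => ?_)
  exact ((measurable_piPrime_apply hAm t (hM m hm) ℓ j).biSup_mono Ioc_subset_Iic_self).mul
    ((hBm _ j).biSup_of_mem (by simp))

end Products

section Moments

variable {mΩ : MeasurableSpace Ω} {μ : Measure Ω} {p : ℝ≥0∞} {𝓕 : ℤ → MeasurableSpace Ω}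
  {A : ℤ → Ω → Matrix (Fin d) (Fin d) ℝ} {B : ℤ → Ω → Fin d → ℝ} {R : Set (Fin d)}

lemma PiProd_apply_ae_eq_zero (hR : ∀ t, ∀ i ∈ R, ∀ j ∉ R, (fun ω => A t ω i j) =ᵐ[μ] 0)
    (t : ℤ) : ∀ (m : ℕ), ∀ i ∈ R, ∀ j ∉ R, (fun ω => PiProd A t m ω i j) =ᵐ[μ] 0
  | 0, i, hi, j, hj => ae_of_all _ fun _ => Matrix.one_apply_ne (by rintro rfl; exact hj hi)
  | m + 1, i, hi, j, hj => Matrix.mul_apply_ae_eq_zero R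
      (PiProd_apply_ae_eq_zero hR t m i hi) (fun k hk => hR _ k hk j hj)

variable [IsFiniteMeasure μ]

lemma memLp_diagProd (h𝓕 : ∀ t, 𝓕 t ≤ mΩ) (hind : iIndep 𝓕 μ)
    (hAm : ∀ t i j, Measurable[𝓕 t] fun ω => A t ω i j) {i : Fin d}
    (hA : ∀ t, MemLp (fun ω => A t ω i i) p μ) (t : ℤ) : ∀ n, MemLp (diagProd A i t n) p μ
  | 0 => memLp_const 1
  | n + 1 => hind.memLp_mul_of_disjoint h𝓕 (S := Ioc (t - n) t) (T := {t - n}) (by simp)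
      (measurable_diagProd hAm i t n) ((hAm _ i i).biSup_of_mem rfl)
      (memLp_diagProd h𝓕 hind hAm hA t n) (hA _)

lemma memLp_PiProd_apply (h𝓕 : ∀ t, 𝓕 t ≤ mΩ) (hind : iIndep 𝓕 μ)
    (hAm : ∀ t i j, Measurable[𝓕 t] fun ω => A t ω i j)
    (hR : ∀ t, ∀ i ∈ R, ∀ j ∉ R, (fun ω => A t ω i j) =ᵐ[μ] 0)
    (hA : ∀ t, ∀ i ∈ R, ∀ j, MemLp (fun ω => A t ω i j) p μ) (t : ℤ) :
    ∀ (m : ℕ), ∀ i ∈ R, ∀ j, MemLp (fun ω => PiProd A t m ω i j) p μ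
  | 0, _, _, _ => memLp_const _
  | m + 1, i, hi, j => hind.memLp_mul_apply_of_disjoint h𝓕 (S := Ioc (t - m) t)
      (T := {t - m}) (by simp) R (measurable_PiProd_apply hAm t m i)
      (fun k => (hAm _ k j).biSup_of_mem rfl)
      (fun k hk => memLp_PiProd_apply h𝓕 hind hAm hR hA t m i hi k)
      (PiProd_apply_ae_eq_zero hR t m i hi) (fun k hk => hA _ k hk j)

lemma memLp_piPrime_apply (h𝓕 : ∀ t, 𝓕 t ≤ mΩ) (hind : iIndep 𝓕 μ)
    (hAm : ∀ t i j, Measurable[𝓕 t] fun ω => A t ω i j)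
    (hR : ∀ t, ∀ i ∈ R, ∀ j ∉ R, (fun ω => A t ω i j) =ᵐ[μ] 0)
    (hA : ∀ t, ∀ i ∈ R, ∀ j, MemLp (fun ω => A t ω i j) p μ) (t : ℤ) (m : ℕ) {i : Fin d}
    (hi : i ∈ R) (j : Fin d) : MemLp (fun ω => piPrime A t m ω i j) p μ := by
  refine hind.memLp_mul_apply_of_disjoint h𝓕 (S := {t}) (T := Ioc (t - 1 - (m - 1 : ℕ)) (t - 1))
    (by simp) R (fun k => (measurable_Azero_apply hAm t i k).biSup_of_mem rfl)
    (measurable_PiProd_apply hAm (t - 1) (m - 1) · j) (fun k _ => ?_) (fun k hk => ?_)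
    (fun k hk => memLp_PiProd_apply h𝓕 hind hAm hR hA (t - 1) (m - 1) k hk j)
  · simp only [Azero_apply]
    split_ifs
    exacts [memLp_const 0, hA t i hi k]
  · have hik : i ≠ k := fun h => hk (h ▸ hi)
    simpa [Azero_apply, hik] using hR t i hi k hk

lemma memLp_QBInner (h𝓕 : ∀ t, 𝓕 t ≤ mΩ) (hind : iIndep 𝓕 μ)
    (hAm : ∀ t i j, Measurable[𝓕 t] fun ω => A t ω i j)
    (hBm : ∀ t i, Measurable[𝓕 t] fun ω => B t ω i)
    (hR : ∀ t, ∀ i ∈ R, ∀ j ∉ R, (fun ω => A t ω i j) =ᵐ[μ] 0)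
    (hA : ∀ t, ∀ i ∈ R, ∀ j, MemLp (fun ω => A t ω i j) p μ)
    (hB : ∀ t, ∀ i ∈ R, MemLp (fun ω => B t ω i) p μ) {J : Finset (Fin d)} (hJ : ∀ j ∈ J, j ∈ R)
    {M : Finset ℕ} (hM : ∀ m ∈ M, 1 ≤ m) {ℓ : Fin d} (hℓ : ℓ ∈ R) (t : ℤ) :
    MemLp (QBInner A B J M ℓ t) p μ := by
  refine (hB t ℓ hℓ).add (memLp_finsetSum _ fun j hj => memLp_finsetSum _ fun m hm => ?_)
  exact hind.memLp_mul_of_disjoint h𝓕 (S := Ioc (t - m) t) (T := {t - m}) (by simp)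
    (measurable_piPrime_apply hAm t (hM m hm) ℓ j) ((hBm _ j).biSup_of_mem rfl)
    (memLp_piPrime_apply h𝓕 hind hAm hR hA t m hℓ j) (hB _ j (hJ j hj))

lemma memLp_QB (h𝓕 : ∀ t, 𝓕 t ≤ mΩ) (hind : iIndep 𝓕 μ)
    (hAm : ∀ t i j, Measurable[𝓕 t] fun ω => A t ω i j)
    (hBm : ∀ t i, Measurable[𝓕 t] fun ω => B t ω i)
    (hR : ∀ t, ∀ i ∈ R, ∀ j ∉ R, (fun ω => A t ω i j) =ᵐ[μ] 0)
    (hA : ∀ t, ∀ i ∈ R, ∀ j, MemLp (fun ω => A t ω i j) p μ)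
    (hB : ∀ t, ∀ i ∈ R, MemLp (fun ω => B t ω i) p μ) {J : Finset (Fin d)} (hJ : ∀ j ∈ J, j ∈ R)
    {ℓ : Fin d} (hℓ : ℓ ∈ R) (s : ℕ) :
    MemLp (fun ω => ∑ n ∈ Finset.range s,
      diagProd A ℓ 0 n ω * QBInner A B J (Finset.Icc 1 (s - n - 1)) ℓ (-n) ω) p μ := by
  refine memLp_finsetSum _ fun n _ => ?_
  have hM : ∀ m ∈ Finset.Icc 1 (s - n - 1), 1 ≤ m := fun m hm => (Finset.mem_Icc.1 hm).1
  refine hind.memLp_mul_of_disjoint h𝓕 (S := Ioi (-n)) (T := Iic (-n))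
    (Iic_disjoint_Ioi le_rfl).symm
    ((measurable_diagProd hAm ℓ 0 n).biSup_mono ?_) (measurable_QBInner hAm hBm J hM ℓ _)
    (memLp_diagProd h𝓕 hind hAm (fun t => hA t ℓ hℓ ℓ) 0 n)
    (memLp_QBInner h𝓕 hind hAm hBm hR hA hB hJ hM hℓ _)
  intro u hu
  simp only [mem_Ioc, mem_Ioi] at hu ⊢
  omega

end Moments


section IID

variable {mΩ : MeasurableSpace Ω} {μ : Measure Ω} {A : ℤ → Ω → Matrix (Fin d) (Fin d) ℝ}
  {B : ℤ → Ω → Fin d → ℝ}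

abbrev sigmaAt (A : ℤ → Ω → Matrix (Fin d) (Fin d) ℝ) (B : ℤ → Ω → Fin d → ℝ) (t : ℤ) :
    MeasurableSpace Ω :=
  MeasurableSpace.comap (fun ω => (Matrix.of.symm (A t ω), B t ω)) inferInstance

lemma measurable_sigmaAt_A (t : ℤ) (i j : Fin d) :
    Measurable[sigmaAt A B t] fun ω => A t ω i j :=
  (show Measurable fun e : (Fin d → Fin d → ℝ) × (Fin d → ℝ) => e.1 i j by fun_prop).comp
    (comap_measurable _)

lemma measurable_sigmaAt_B (t : ℤ) (i : Fin d) :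
    Measurable[sigmaAt A B t] fun ω => B t ω i :=
  (show Measurable fun e : (Fin d → Fin d → ℝ) × (Fin d → ℝ) => e.2 i by fun_prop).comp
    (comap_measurable _)

lemma IIDCopies.measurable_pair (h : IIDCopies μ A B) (t : ℤ) :
    Measurable fun ω => (Matrix.of.symm (A t ω), B t ω) :=
  (measurable_pi_lambda _ fun i => measurable_pi_lambda _ fun j => h.1 t i j).prodMk
    (measurable_pi_lambda _ fun i => h.2.1 t i)

lemma IIDCopies.sigmaAt_le (h : IIDCopies μ A B) (t : ℤ) : sigmaAt A B t ≤ mΩ :=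
  (h.measurable_pair t).comap_le

lemma IIDCopies.iIndep_sigmaAt (h : IIDCopies μ A B) : iIndep (sigmaAt A B) μ :=
  (iIndepFun_iff_iIndep _ _ μ).1 h.2.2.1

lemma IIDCopies.identDistrib (h : IIDCopies μ A B) (t : ℤ) :
    IdentDistrib (fun ω => (Matrix.of.symm (A t ω), B t ω))
      (fun ω => (Matrix.of.symm (A 0 ω), B 0 ω)) μ μ :=
  ⟨(h.measurable_pair t).aemeasurable, (h.measurable_pair 0).aemeasurable, h.2.2.2 t⟩

lemma IIDCopies.memLp_A [IsFiniteMeasure μ] {α : Fin d → ℝ} (h : IIDCopies μ A B)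
    (hT : CondT μ (A 0) (B 0) α) {β : ℝ} (hβ : 0 < β) (t : ℤ) {i : Fin d} (hβi : β ≤ α i)
    (j : Fin d) : MemLp (fun ω => A t ω i j) (ENNReal.ofReal β) μ :=
  ((h.identDistrib t).comp (show Measurable fun e : (Fin d → Fin d → ℝ) × (Fin d → ℝ) =>
    e.1 i j by fun_prop)).memLp_iff.2 (memLp_ofReal_of_integrable_rpow
      (hT.measA i j).aestronglyMeasurable (hT.nonnegA i j) hβ hβi (hT.A_moment i j))

lemma IIDCopies.memLp_B [IsFiniteMeasure μ] {α : Fin d → ℝ} (h : IIDCopies μ A B)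
    (hT : CondT μ (A 0) (B 0) α) {β : ℝ} (hβ : 0 < β) (t : ℤ) {i : Fin d} (hβi : β ≤ α i) :
    MemLp (fun ω => B t ω i) (ENNReal.ofReal β) μ :=
  ((h.identDistrib t).comp (show Measurable fun e : (Fin d → Fin d → ℝ) × (Fin d → ℝ) =>
    e.2 i by fun_prop)).memLp_iff.2 (memLp_ofReal_of_integrable_rpow
      (hT.measB i).aestronglyMeasurable (hT.nonnegB i) hβ hβi (hT.B_moment i))

lemma IIDCopies.ae_eq_zero_of_not_directDep {α : Fin d → ℝ} (h : IIDCopies μ A B)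
    (hT : CondT μ (A 0) (B 0) α) {i j : Fin d} (hij : ¬ DirectDep μ (A 0) i j) (t : ℤ) :
    (fun ω => A t ω i j) =ᵐ[μ] 0 :=
  (h.identDistrib t).symm.ae_snd (p := fun e => e.1 i j = 0)
    (measurableSet_eq_fun (by fun_prop) measurable_const) (hT.ae_eq_zero_of_not_directDep hij)

end IID

end TriSRE

namespace TriSRE

variable {Ω : Type*} [MeasurableSpace Ω] {d : ℕ}

open scoped Classical in
theorem QB_moment_finite_general
    (μ : Measure Ω) [IsProbabilityMeasure μ]
    (A : ℤ → Ω → Matrix (Fin d) (Fin d) ℝ) (B : ℤ → Ω → Fin d → ℝ) (α : Fin d → ℝ)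
    (hiid : IIDCopies μ A B) (hT : CondT μ (A 0) (B 0) α) :
    ∀ ℓ : Fin d, ∀ s : ℕ,
      ∫⁻ ω, ENNReal.ofReal
        ((∑ n ∈ Finset.range s, diagProd A ℓ 0 n ω *
            (B (-(n : ℤ)) ω ℓ +
              ∑ j ∈ Finset.univ.filter (fun j => Dep μ (A 0) ℓ j ∧ ℓ ≠ j),
                ∑ m ∈ Finset.Icc 1 (s - n - 1),
                  piPrime A (-(n : ℤ)) m ω ℓ j * B (-(n : ℤ) - m) ω j))
          ^ tildeAlpha μ (A 0) α ℓ) ∂μ < ⊤ := by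
  intro ℓ s
  have hβ := tildeAlpha_pos (μ := μ) (A := A 0) hT.alpha_pos ℓ
  refine MemLp.lintegral_ofReal_rpow_lt_top hβ (memLp_QB (R := {j | Dep μ (A 0) ℓ j})
    hiid.sigmaAt_le hiid.iIndep_sigmaAt measurable_sigmaAt_A measurable_sigmaAt_B ?_ ?_ ?_ ?_
    Relation.ReflTransGen.refl s)
  · exact fun t i hi j hj => hiid.ae_eq_zero_of_not_directDep hT (fun h => hj (hi.tail h)) t
  · exact fun t i hi => hiid.memLp_A hT hβ t (tildeAlpha_le hi)
  · exact fun t i hi => hiid.memLp_B hT hβ t (tildeAlpha_le hi)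
  · exact fun j hj => (Finset.mem_filter.1 hj).2.1

open scoped Classical in
/-- Lemma 5.3, moment bound: `E[Q_B(s)^{α̃ ℓ}] < ∞`. -/
theorem QB_moment_finite
    (μ : Measure Ω) [IsProbabilityMeasure μ] (hd : 1 ≤ d)
    (A : ℤ → Ω → Matrix (Fin d) (Fin d) ℝ) (B : ℤ → Ω → Fin d → ℝ) (α : Fin d → ℝ)
    (hiid : IIDCopies μ A B) (hT : CondT μ (A 0) (B 0) α) :
    ∀ ℓ : Fin d, ∀ s : ℕ,
      ∫⁻ ω, ENNReal.ofReal
        ((∑ n ∈ Finset.range s, diagProd A ℓ 0 n ω *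
            (B (-(n : ℤ)) ω ℓ +
              ∑ j ∈ Finset.univ.filter (fun j => Dep μ (A 0) ℓ j ∧ ℓ ≠ j),
                ∑ m ∈ Finset.Icc 1 (s - n - 1),
                  piPrime A (-(n : ℤ)) m ω ℓ j * B (-(n : ℤ) - m) ω j))
          ^ tildeAlpha μ (A 0) α ℓ) ∂μ < ⊤ :=
  QB_moment_finite_general μ A B α hiid hT

end TriSRE
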